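/- Let N, m ≥ 1 be integers with 2m > N, let Ω ⊆ ℝ^N be open and bounded, and for multi-indices α, β with |α|, |β| ≤ m let a_{α,β} : Ω → ℂ be measurable with |a_{α,β}| ≤ M almost everywhere. Define Q(g) := Σ_{|α|≤m, |β|≤m} ∫_Ω a_{α,β}(y) D^β g(y) conj(D^α g(y)) dy for g ∈ C_c^∞(Ω), and assume Re Q(g) ≥ 0 for every g ∈ C_c^∞(Ω). Let ψ : ℝ^N → ℂ be smooth with closed support contained in the open unit ball and ψ(0) = 1. Then there is a constant c > 0, depending only on ψ, M, m and N, such that for every x ∈ Ω and every t with 0 < t ≤ min(d(x)^{2m}, 1), where d(x) := dist(x, Ωᶜ): sup over nonzero g ∈ C_c^∞(Ω) of |g(x)|² / (t · Re Q(g) + ‖g‖₂²) ≥ c · t^{−N/(2m)}. -/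

import Mathlib

open MeasureTheory

/-- The partial derivative `∂/∂yᵢ` of a function on `ℝ^N`. -/
noncomputable def pderiv' {N : ℕ} (i : Fin N)
    (f : EuclideanSpace ℝ (Fin N) → ℂ) : EuclideanSpace ℝ (Fin N) → ℂ :=
  fun y => fderiv ℝ f y (EuclideanSpace.single i 1)

/-- The multi-index partial derivative `D^α = ∂^{|α|}/∂y₁^{α₁}⋯∂y_N^{α_N}`. -/
noncomputable def mderiv {N : ℕ} (α : Fin N → ℕ)
    (f : EuclideanSpace ℝ (Fin N) → ℂ) : EuclideanSpace ℝ (Fin N) → ℂ :=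
  (List.finRange N).foldr (fun i g => (pderiv' i)^[α i] g) f

/-- The finite set of multi-indices `α` with `|α| ≤ m`, encoded with entries in
`Fin (m+1)` (any multi-index of total degree `≤ m` has all entries `≤ m`). -/
noncomputable def multiIndices (N m : ℕ) : Finset (Fin N → Fin (m + 1)) :=
  Finset.univ.filter (fun α => (∑ i, (α i : ℕ)) ≤ m)

/-- The quadratic form `Q(g) = Σ_{|α|≤m,|β|≤m} ∫_Ω a_{αβ} D^β g conj(D^α g)`. -/
noncomputable def quadForm {N : ℕ} (m : ℕ) (Ω : Set (EuclideanSpace ℝ (Fin N)))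
    (a : (Fin N → ℕ) → (Fin N → ℕ) → EuclideanSpace ℝ (Fin N) → ℂ)
    (g : EuclideanSpace ℝ (Fin N) → ℂ) : ℂ :=
  ∑ α ∈ multiIndices N m, ∑ β ∈ multiIndices N m,
    ∫ y in Ω, a (fun i => (α i : ℕ)) (fun i => (β i : ℕ)) y
      * mderiv (fun i => (β i : ℕ)) g y
      * (starRingEnd ℂ) (mderiv (fun i => (α i : ℕ)) g y)

/-- `g` is a test function for `Ω`, i.e. `g ∈ C_c^∞(Ω)`. -/
def IsTestFun {N : ℕ} (Ω : Set (EuclideanSpace ℝ (Fin N)))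
    (g : EuclideanSpace ℝ (Fin N) → ℂ) : Prop :=
  ContDiff ℝ (⊤ : ℕ∞) g ∧ HasCompactSupport g ∧ tsupport g ⊆ Ω


variable {N : ℕ}

lemma pderiv'_contDiff {f : EuclideanSpace ℝ (Fin N) → ℂ} (hf : ContDiff ℝ (⊤ : ℕ∞) f) (i : Fin N) :
    ContDiff ℝ (⊤ : ℕ∞) (pderiv' i f) :=
  (hf.fderiv_right (by simp)).clm_apply contDiff_const

lemma pderiv'_iter_contDiff {f : EuclideanSpace ℝ (Fin N) → ℂ} (hf : ContDiff ℝ (⊤ : ℕ∞) f)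
    (i : Fin N) (k : ℕ) : ContDiff ℝ (⊤ : ℕ∞) ((pderiv' i)^[k] f) := by
  induction k with
  | zero => exact hf
  | succ k ih => rw [Function.iterate_succ_apply']; exact pderiv'_contDiff ih i

lemma inner_contDiff (c : ℝ) (x : EuclideanSpace ℝ (Fin N)) :
    ContDiff ℝ (⊤ : ℕ∞) (fun y : EuclideanSpace ℝ (Fin N) => c • (y - x)) :=
  ((contDiff_id.sub contDiff_const)).const_smul c

lemma pderiv'_comp_smul {f : EuclideanSpace ℝ (Fin N) → ℂ} (hf : ContDiff ℝ (⊤ : ℕ∞) f)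
    (c : ℝ) (x : EuclideanSpace ℝ (Fin N)) (i : Fin N) :
    pderiv' i (fun y => f (c • (y - x))) = fun y => c • pderiv' i f (c • (y - x)) := by
  funext y
  have h1 : HasFDerivAt (fun y : EuclideanSpace ℝ (Fin N) => c • (y - x))
      (c • ContinuousLinearMap.id ℝ (EuclideanSpace ℝ (Fin N))) y :=
    ((hasFDerivAt_id y).sub_const x).const_smul c
  have h2 : HasFDerivAt f (fderiv ℝ f (c • (y - x))) (c • (y - x)) :=
    (hf.differentiable (by simp) (c • (y - x))).hasFDerivAt
  have h3 : HasFDerivAt (fun y => f (c • (y - x)))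
      ((fderiv ℝ f (c • (y - x))).comp (c • ContinuousLinearMap.id ℝ (EuclideanSpace ℝ (Fin N)))) y :=
    h2.comp y h1
  rw [pderiv', h3.fderiv]
  simp [ContinuousLinearMap.comp_apply, ContinuousLinearMap.smul_apply]
  exact Or.inl rfl

lemma pderiv'_const_smul {f : EuclideanSpace ℝ (Fin N) → ℂ} (hf : Differentiable ℝ f)
    (d : ℝ) (i : Fin N) :
    pderiv' i (fun y => d • f y) = fun y => d • pderiv' i f y := by
  funext y
  simp only [pderiv', fderiv_fun_const_smul (hf y) d, ContinuousLinearMap.smul_apply]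

lemma pderiv'_iter_const_smul {f : EuclideanSpace ℝ (Fin N) → ℂ} (hf : ContDiff ℝ (⊤ : ℕ∞) f)
    (d : ℝ) (i : Fin N) (k : ℕ) :
    (pderiv' i)^[k] (fun y => d • f y) = fun y => d • (pderiv' i)^[k] f y := by
  induction k with
  | zero => rfl
  | succ k ih =>
    rw [Function.iterate_succ_apply', ih, Function.iterate_succ_apply',
      pderiv'_const_smul ((pderiv'_iter_contDiff hf i k).differentiable (by simp)) d i]

lemma pderiv'_iter_comp_smul {f : EuclideanSpace ℝ (Fin N) → ℂ} (hf : ContDiff ℝ (⊤ : ℕ∞) f)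
    (c : ℝ) (x : EuclideanSpace ℝ (Fin N)) (i : Fin N) (k : ℕ) :
    (pderiv' i)^[k] (fun y => f (c • (y - x)))
      = fun y => (c ^ k : ℝ) • ((pderiv' i)^[k] f) (c • (y - x)) := by
  induction k with
  | zero => simp
  | succ k ih =>
    rw [Function.iterate_succ_apply', ih]
    have hF : ContDiff ℝ (⊤ : ℕ∞) ((pderiv' i)^[k] f) := pderiv'_iter_contDiff hf i k
    have hcomp : ContDiff ℝ (⊤ : ℕ∞) (fun y => ((pderiv' i)^[k] f) (c • (y - x))) :=
      hF.comp (inner_contDiff c x)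
    rw [pderiv'_const_smul (hcomp.differentiable (by simp)) _ i,
      pderiv'_comp_smul hF c x i, Function.iterate_succ_apply']
    funext y
    rw [smul_smul, ← pow_succ]

lemma mderiv_comp_smul {f : EuclideanSpace ℝ (Fin N) → ℂ} (hf : ContDiff ℝ (⊤ : ℕ∞) f)
    (c : ℝ) (x : EuclideanSpace ℝ (Fin N)) (α : Fin N → ℕ) :
    mderiv α (fun y => f (c • (y - x)))
      = fun y => (c ^ (∑ i, α i) : ℝ) • mderiv α f (c • (y - x)) := by
  have key : ∀ l : List (Fin N),
      l.foldr (fun i g => (pderiv' i)^[α i] g) (fun y => f (c • (y - x)))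
        = fun y => (c ^ ((l.map α).sum) : ℝ)
            • (l.foldr (fun i g => (pderiv' i)^[α i] g) f) (c • (y - x)) := by
    intro l
    induction l with
    | nil => simp
    | cons i l ih =>
      have hF : ContDiff ℝ (⊤ : ℕ∞) (l.foldr (fun i g => (pderiv' i)^[α i] g) f) := by
        clear ih
        induction l with
        | nil => exact hf
        | cons j l ih2 => exact pderiv'_iter_contDiff ih2 j (α j)
      simp only [List.foldr_cons, ih, List.map_cons, List.sum_cons]
      have hcomp : ContDiff ℝ (⊤ : ℕ∞) (fun y => (l.foldr (fun i g => (pderiv' i)^[α i] g) f) (c • (y - x))) :=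
        hF.comp (inner_contDiff c x)
      rw [pderiv'_iter_const_smul hcomp _ i (α i),
        pderiv'_iter_comp_smul hF c x i (α i)]
      funext y
      rw [smul_smul, ← pow_add, Nat.add_comm]
  unfold mderiv
  rw [key (List.finRange N), Fin.sum_univ_def]

lemma pderiv'_support {f : EuclideanSpace ℝ (Fin N) → ℂ} (i : Fin N) :
    Function.support (pderiv' i f) ⊆ tsupport f := by
  intro y hy
  by_contra h
  have : fderiv ℝ f y = 0 := by
    by_contra h2
    exact h (support_fderiv_subset ℝ h2)
  exact hy (by simp [pderiv', this])

lemma pderiv'_tsupport {f : EuclideanSpace ℝ (Fin N) → ℂ} (i : Fin N) :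
    tsupport (pderiv' i f) ⊆ tsupport f :=
  closure_minimal (pderiv'_support i) isClosed_closure

lemma pderiv'_iter_tsupport {f : EuclideanSpace ℝ (Fin N) → ℂ} (i : Fin N) (k : ℕ) :
    tsupport ((pderiv' i)^[k] f) ⊆ tsupport f := by
  induction k with
  | zero => exact subset_rfl
  | succ k ih =>
    rw [Function.iterate_succ_apply']
    exact (pderiv'_tsupport i).trans ih

lemma mderiv_tsupport {f : EuclideanSpace ℝ (Fin N) → ℂ} (α : Fin N → ℕ) :
    tsupport (mderiv α f) ⊆ tsupport f := by
  unfold mderiv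
  generalize List.finRange N = l
  induction l with
  | nil => exact subset_rfl
  | cons i l ih => exact (pderiv'_iter_tsupport i (α i)).trans ih

lemma mderiv_contDiff {f : EuclideanSpace ℝ (Fin N) → ℂ} (hf : ContDiff ℝ (⊤ : ℕ∞) f)
    (α : Fin N → ℕ) : ContDiff ℝ (⊤ : ℕ∞) (mderiv α f) := by
  unfold mderiv
  generalize List.finRange N = l
  induction l with
  | nil => exact hf
  | cons i l ih => exact pderiv'_iter_contDiff ih i (α i)

lemma key_int {N : ℕ} {Ω : Set (EuclideanSpace ℝ (Fin N))}
    {F : Type*} [NormedAddCommGroup F] [NormedSpace ℝ F]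
    {f : EuclideanSpace ℝ (Fin N) → F}
    (hfm : AEStronglyMeasurable f (volume.restrict Ω))
    {s : Set (EuclideanSpace ℝ (Fin N))} (hs : MeasurableSet s) (hsfin : volume s ≠ ⊤)
    {B : ℝ} (hB : 0 ≤ B)
    (hbd : ∀ᵐ y ∂(volume.restrict Ω), ‖f y‖ ≤ B * s.indicator 1 y) :
    ‖∫ y in Ω, f y‖ ≤ B * (volume s).toReal := by
  have hdom_eq : (fun y => B * s.indicator 1 y) = s.indicator (fun _ => B) := by
    funext y
    by_cases hy : y ∈ s <;> simp [Set.indicator_apply, hy]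
  have hdom_int : Integrable (fun y => B * s.indicator 1 y) (volume.restrict Ω) := by
    rw [hdom_eq, integrable_indicator_iff hs]
    exact (integrableOn_const_iff (by simp)).mpr (Or.inr (lt_of_le_of_lt
      (Measure.restrict_apply_le Ω s) hsfin.lt_top))
  have hf_int : Integrable f (volume.restrict Ω) := hdom_int.mono' hfm hbd
  calc ‖∫ y in Ω, f y‖ ≤ ∫ y in Ω, ‖f y‖ := norm_integral_le_integral_norm f
    _ ≤ ∫ y in Ω, B * s.indicator 1 y := integral_mono_ae hf_int.norm hdom_int hbd
    _ = ((volume.restrict Ω) s).toReal * B := by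
        rw [hdom_eq, integral_indicator_const _ hs, smul_eq_mul, measureReal_def]
    _ ≤ B * (volume s).toReal := by
        rw [mul_comm B]
        exact mul_le_mul_of_nonneg_right
          (ENNReal.toReal_mono hsfin (Measure.restrict_apply_le Ω s)) hB

set_option maxHeartbeats 1000000 in
/-- **Short-time lower bound for the Green-type quantity**
`G_t(x,x) = sup_{0 ≠ g ∈ C_c^∞(Ω)} |g(x)|²/(t·Re Q(g) + ‖g‖₂²) ≥ c·t^{−N/(2m)}`
for all `x ∈ Ω` and `0 < t ≤ min(d(x)^{2m}, 1)`; the supremum is witnessed by an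
explicit test function. -/
theorem green_lower_bound_short_time
    (N m : ℕ) (hN : 1 ≤ N) (hm : 1 ≤ m) (h2m : N < 2 * m)
    (Ω : Set (EuclideanSpace ℝ (Fin N))) (hΩo : IsOpen Ω)
    (hΩb : Bornology.IsBounded Ω)
    (M : ℝ) (hM : 0 < M)
    (a : (Fin N → ℕ) → (Fin N → ℕ) → EuclideanSpace ℝ (Fin N) → ℂ)
    (ha_meas : ∀ α β : Fin N → ℕ, Measurable (a α β))
    (ha_bd : ∀ α β : Fin N → ℕ, ∀ᵐ y ∂(volume.restrict Ω), ‖a α β y‖ ≤ M)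
    (hQpos : ∀ g : EuclideanSpace ℝ (Fin N) → ℂ, IsTestFun Ω g →
      0 ≤ (quadForm m Ω a g).re)
    (ψ : EuclideanSpace ℝ (Fin N) → ℂ) (hψ : ContDiff ℝ (⊤ : ℕ∞) ψ)
    (hψsupp : tsupport ψ ⊆ Metric.ball (0 : EuclideanSpace ℝ (Fin N)) 1)
    (hψ0 : ψ 0 = 1) :
    ∃ c : ℝ, 0 < c ∧
      ∀ x ∈ Ω, ∀ t : ℝ, 0 < t →
        t ≤ min (Metric.infDist x Ωᶜ ^ (2 * m)) 1 →
        ∃ g : EuclideanSpace ℝ (Fin N) → ℂ, IsTestFun Ω g ∧ g ≠ 0 ∧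
          c * t ^ (-(N : ℝ) / (2 * m))
            ≤ ‖g x‖ ^ 2 / (t * (quadForm m Ω a g).re + ∫ y in Ω, ‖g y‖ ^ 2) := by
  classical
  have hψcs : HasCompactSupport ψ :=
    Metric.isCompact_iff_isClosed_bounded.mpr
      ⟨isClosed_tsupport ψ, Metric.isBounded_ball.subset hψsupp⟩
  have hbd0 : ∀ γ : Fin N → Fin (m + 1), ∃ C : ℝ, ∀ z,
      ‖mderiv (fun i => (γ i : ℕ)) ψ z‖ ≤ C := by
    intro γ
    have hcs : HasCompactSupport (mderiv (fun i => (γ i : ℕ)) ψ) :=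
      hψcs.mono' ((subset_tsupport _).trans (mderiv_tsupport _))
    exact hcs.exists_bound_of_continuous (mderiv_contDiff hψ _).continuous
  choose Cb hCb using hbd0
  obtain ⟨C0, hC0⟩ := hψcs.exists_bound_of_continuous hψ.continuous
  set S := multiIndices N m with hSdef
  set C : ℝ := 1 + max C0 0 + ∑ γ ∈ S, max (Cb γ) 0 with hCdef
  have hsum_nonneg : 0 ≤ ∑ γ ∈ S, max (Cb γ) 0 :=
    Finset.sum_nonneg (fun _ _ => le_max_right _ _)
  have hC1 : 1 ≤ C := by
    rw [hCdef]; have := le_max_right C0 0; linarith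
  have hCpos : 0 < C := lt_of_lt_of_le one_pos hC1
  have hCψ : ∀ z, ‖ψ z‖ ≤ C := by
    intro z
    have h1 := hC0 z
    have h2 := le_max_left C0 0
    rw [hCdef]; linarith
  have hCd : ∀ γ ∈ S, ∀ z, ‖mderiv (fun i => ((γ : Fin N → Fin (m+1)) i : ℕ)) ψ z‖ ≤ C := by
    intro γ hγ z
    have h1 := hCb γ z
    have h2 : max (Cb γ) 0 ≤ ∑ γ ∈ S, max (Cb γ) 0 :=
      Finset.single_le_sum (f := fun γ => max (Cb γ) 0) (fun _ _ => le_max_right _ _) hγ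
    have h3 := le_max_left (Cb γ) 0
    have h4 := le_max_right C0 0
    rw [hCdef]; linarith
  set V : ℝ := (volume (Metric.ball (0 : EuclideanSpace ℝ (Fin N)) 1)).toReal with hVdef
  have hV : 0 < V := ENNReal.toReal_pos
    (Metric.measure_ball_pos volume 0 one_pos).ne' measure_ball_lt_top.ne
  set K : ℝ := (S.card : ℝ) with hKdef
  have hK0 : 0 ≤ K := Nat.cast_nonneg _
  set D₀ : ℝ := (K ^ 2 * M * C ^ 2 + C ^ 2) * V with hD₀def
  have hD₀ : 0 < D₀ := by
    apply mul_pos _ hV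
    have h1 : 0 ≤ K ^ 2 * M * C ^ 2 := by positivity
    nlinarith [sq_nonneg C]
  clear_value C V K D₀
  refine ⟨D₀⁻¹, inv_pos.mpr hD₀, ?_⟩
  intro x hx t ht htle
  have htd : t ≤ Metric.infDist x Ωᶜ ^ (2 * m) := le_trans htle (min_le_left _ _)
  have ht1 : t ≤ 1 := le_trans htle (min_le_right _ _)
  set d : ℝ := Metric.infDist x Ωᶜ with hddef
  have hd0 : 0 < d := by
    rcases lt_or_ge 0 d with h | h
    · exact h
    · exfalso
      have hdz : d = 0 := le_antisymm h Metric.infDist_nonneg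
      rw [hdz, zero_pow (by omega : 2 * m ≠ 0)] at htd
      linarith
  have hm2 : (0 : ℝ) < 2 * m := by
    have : (1 : ℝ) ≤ m := by exact_mod_cast hm
    linarith
  set r : ℝ := t ^ (1 / (2 * (m : ℝ))) with hrdef
  have hr0 : 0 < r := Real.rpow_pos_of_pos ht _
  have hrpow2m : r ^ (2 * m) = t := by
    rw [hrdef, ← Real.rpow_natCast (t ^ (1 / (2 * (m : ℝ)))) (2 * m),
      ← Real.rpow_mul ht.le]
    push_cast
    rw [one_div, inv_mul_cancel₀ hm2.ne', Real.rpow_one]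
  have hrN : r ^ N = t ^ ((N : ℝ) / (2 * m)) := by
    rw [hrdef, ← Real.rpow_natCast (t ^ (1 / (2 * (m : ℝ)))) N, ← Real.rpow_mul ht.le]
    congr 1
    field_simp
  have hr1 : r ≤ 1 := Real.rpow_le_one ht.le ht1 (by positivity)
  have hrd : r ≤ d := by
    have h1 : r ≤ (d ^ (2 * m)) ^ (1 / (2 * (m : ℝ))) :=
      Real.rpow_le_rpow ht.le htd (by positivity)
    refine h1.trans_eq ?_
    rw [← Real.rpow_natCast d (2 * m), ← Real.rpow_mul hd0.le]
    push_cast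
    rw [mul_one_div, div_self hm2.ne', Real.rpow_one]
  have hrinv1 : 1 ≤ r⁻¹ := (one_le_inv₀ hr0).mpr hr1
  clear_value r d
  set g : EuclideanSpace ℝ (Fin N) → ℂ := fun y => ψ (r⁻¹ • (y - x)) with hgdef
  have hg : ContDiff ℝ (⊤ : ℕ∞) g := hψ.comp (inner_contDiff r⁻¹ x)
  have hgx : g x = 1 := by rw [hgdef]; simp [hψ0]
  have hsupp : tsupport g ⊆ Metric.ball x r := by
    have h1 : Function.support g ⊆ {y | r⁻¹ • (y - x) ∈ tsupport ψ} := by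
      intro y hy
      exact subset_tsupport ψ hy
    have h2 : IsClosed {y : EuclideanSpace ℝ (Fin N) | r⁻¹ • (y - x) ∈ tsupport ψ} :=
      (isClosed_tsupport ψ).preimage ((inner_contDiff r⁻¹ x).continuous)
    have h3 := closure_minimal h1 h2
    intro y hy
    have h4 : r⁻¹ • (y - x) ∈ Metric.ball (0 : EuclideanSpace ℝ (Fin N)) 1 :=
      hψsupp (h3 hy)
    rw [Metric.mem_ball, dist_zero_right, norm_smul, norm_inv, Real.norm_eq_abs,
      abs_of_pos hr0] at h4
    rw [Metric.mem_ball, dist_eq_norm]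
    have h5 := mul_lt_mul_of_pos_left h4 hr0
    rw [← mul_assoc, mul_inv_cancel₀ hr0.ne', one_mul, mul_one] at h5
    exact h5
  have hball : Metric.ball x r ⊆ Ω := by
    intro y hy
    by_contra hyΩ
    have h1 : d ≤ dist x y := by
      rw [hddef]; exact Metric.infDist_le_dist_of_mem hyΩ
    rw [Metric.mem_ball, dist_comm] at hy
    linarith [hy.trans_le hrd]
  have hcs : HasCompactSupport g :=
    Metric.isCompact_iff_isClosed_bounded.mpr
      ⟨isClosed_tsupport g, Metric.isBounded_ball.subset hsupp⟩
  have htf : IsTestFun Ω g := ⟨hg, hcs, hsupp.trans hball⟩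
  have hgne : g ≠ 0 := by
    intro h
    rw [h] at hgx
    simp at hgx
  have hmd : ∀ γ : Fin N → ℕ, mderiv γ g
      = fun y => ((r⁻¹ ^ (∑ i, γ i) : ℝ)) • mderiv γ ψ (r⁻¹ • (y - x)) := by
    intro γ
    rw [hgdef]
    exact mderiv_comp_smul hψ r⁻¹ x γ
  clear_value g
  have hgz : ∀ y ∉ Metric.closedBall x r,
      ∀ γ : Fin N → ℕ, mderiv γ ψ (r⁻¹ • (y - x)) = 0 := by
    intro y hy γ
    apply image_eq_zero_of_notMem_tsupport
    intro hmem
    have h1 : r⁻¹ • (y - x) ∈ Metric.ball (0 : EuclideanSpace ℝ (Fin N)) 1 :=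
      hψsupp ((mderiv_tsupport γ) hmem)
    rw [Metric.mem_ball, dist_zero_right, norm_smul, norm_inv, Real.norm_eq_abs,
      abs_of_pos hr0] at h1
    rw [Metric.mem_closedBall, dist_eq_norm, not_le] at hy
    have h5 := mul_lt_mul_of_pos_left h1 hr0
    rw [← mul_assoc, mul_inv_cancel₀ hr0.ne', one_mul, mul_one] at h5
    linarith
  have hDg : ∀ γ ∈ S, ∀ y : EuclideanSpace ℝ (Fin N),
      ‖mderiv (fun i => ((γ : Fin N → Fin (m+1)) i : ℕ)) g y‖
        ≤ (r⁻¹ ^ m * C) * (Metric.closedBall x r).indicator 1 y := by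
    intro γ hγ y
    rw [hmd]
    simp only []
    rw [norm_smul, Real.norm_eq_abs, abs_of_nonneg (by positivity)]
    by_cases hy : y ∈ Metric.closedBall x r
    · rw [Set.indicator_of_mem hy, Pi.one_apply, mul_one]
      have hsum : (∑ i, ((γ i : ℕ))) ≤ m := (Finset.mem_filter.mp hγ).2
      have h1 : r⁻¹ ^ (∑ i, ((γ i : ℕ))) ≤ r⁻¹ ^ m := pow_le_pow_right₀ hrinv1 hsum
      have h2 := hCd γ hγ (r⁻¹ • (y - x))
      have h4 := norm_nonneg (mderiv (fun i => ((γ : Fin N → Fin (m+1)) i : ℕ)) ψ (r⁻¹ • (y - x)))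
      have h5 : (0:ℝ) ≤ r⁻¹ ^ m := by positivity
      nlinarith
    · rw [Set.indicator_of_notMem hy, hgz y hy]
      simp
  have hNorm_conj : ∀ z : ℂ, ‖(starRingEnd ℂ) z‖ = ‖z‖ := fun z => RCLike.norm_conj z
  have hT : ∀ α ∈ S, ∀ β ∈ S,
      ‖∫ y in Ω, a (fun i => ((α : Fin N → Fin (m+1)) i : ℕ)) (fun i => (β i : ℕ)) y
        * mderiv (fun i => ((β : Fin N → Fin (m+1)) i : ℕ)) g y
        * (starRingEnd ℂ) (mderiv (fun i => (α i : ℕ)) g y)‖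
      ≤ (M * (r⁻¹ ^ m * C) ^ 2) * (volume (Metric.closedBall x r)).toReal := by
    intro α hα β hβ
    have hmeas : AEStronglyMeasurable
        (fun y => a (fun i => ((α : Fin N → Fin (m+1)) i : ℕ)) (fun i => (β i : ℕ)) y
          * mderiv (fun i => ((β : Fin N → Fin (m+1)) i : ℕ)) g y
          * (starRingEnd ℂ) (mderiv (fun i => (α i : ℕ)) g y)) (volume.restrict Ω) := by
      refine (((ha_meas _ _).aestronglyMeasurable.mul
        ((mderiv_contDiff hg _).continuous.aestronglyMeasurable)).mul
        ((Complex.continuous_conj.comp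
          (mderiv_contDiff hg _).continuous).aestronglyMeasurable))
    apply key_int hmeas measurableSet_closedBall measure_closedBall_lt_top.ne
      (by positivity)
    filter_upwards [ha_bd (fun i => ((α : Fin N → Fin (m+1)) i : ℕ)) (fun i => (β i : ℕ))]
      with y hy
    by_cases hmem : y ∈ Metric.closedBall x r
    · have hb := hDg β hβ y
      have ha' := hDg α hα y
      rw [Set.indicator_of_mem hmem, Pi.one_apply, mul_one] at hb ha' ⊢
      rw [norm_mul, norm_mul, hNorm_conj]
      have h0 : (0:ℝ) ≤ r⁻¹ ^ m * C := by positivity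
      have e1 : ‖a (fun i => ((α : Fin N → Fin (m+1)) i : ℕ)) (fun i => (β i : ℕ)) y‖
          * ‖mderiv (fun i => ((β : Fin N → Fin (m+1)) i : ℕ)) g y‖ ≤ M * (r⁻¹ ^ m * C) :=
        mul_le_mul hy hb (norm_nonneg _) hM.le
      have e2 := mul_le_mul e1 ha' (norm_nonneg _)
        (mul_nonneg hM.le h0)
      calc ‖a _ _ y‖ * ‖mderiv _ g y‖ * ‖mderiv _ g y‖
          ≤ M * (r⁻¹ ^ m * C) * (r⁻¹ ^ m * C) := e2
        _ = M * (r⁻¹ ^ m * C) ^ 2 := by ring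
    · rw [Set.indicator_of_notMem hmem, mul_zero]
      have hz : mderiv (fun i => ((β : Fin N → Fin (m+1)) i : ℕ)) g y = 0 := by
        rw [hmd]
        simp [hgz y hmem]
      rw [hz, mul_zero, zero_mul, norm_zero]
  have hQ : (quadForm m Ω a g).re
      ≤ K ^ 2 * ((M * (r⁻¹ ^ m * C) ^ 2) * (volume (Metric.closedBall x r)).toReal) := by
    have h1 : (quadForm m Ω a g).re ≤ ‖quadForm m Ω a g‖ := by
      exact Complex.re_le_norm _
    refine h1.trans ?_
    unfold quadForm
    refine (norm_sum_le _ _).trans ?_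
    have h2 : ∀ α ∈ S, ‖∑ β ∈ S, ∫ y in Ω,
        a (fun i => ((α : Fin N → Fin (m+1)) i : ℕ)) (fun i => (β i : ℕ)) y
        * mderiv (fun i => ((β : Fin N → Fin (m+1)) i : ℕ)) g y
        * (starRingEnd ℂ) (mderiv (fun i => (α i : ℕ)) g y)‖
        ≤ K * ((M * (r⁻¹ ^ m * C) ^ 2) * (volume (Metric.closedBall x r)).toReal) := by
      intro α hα
      refine (norm_sum_le _ _).trans ?_
      have h4 : ∑ β ∈ S, ‖∫ y in Ω,
          a (fun i => ((α : Fin N → Fin (m+1)) i : ℕ)) (fun i => (β i : ℕ)) y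
          * mderiv (fun i => ((β : Fin N → Fin (m+1)) i : ℕ)) g y
          * (starRingEnd ℂ) (mderiv (fun i => (α i : ℕ)) g y)‖
          ≤ S.card • ((M * (r⁻¹ ^ m * C) ^ 2)
              * (volume (Metric.closedBall x r)).toReal) :=
        Finset.sum_le_card_nsmul S _ _ (fun β hβ => hT α hα β hβ)
      rw [nsmul_eq_mul] at h4
      exact h4.trans_eq (by rw [hKdef])
    have h3 : ∑ α ∈ S, ‖∑ β ∈ S, ∫ y in Ω,
        a (fun i => ((α : Fin N → Fin (m+1)) i : ℕ)) (fun i => (β i : ℕ)) y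
        * mderiv (fun i => ((β : Fin N → Fin (m+1)) i : ℕ)) g y
        * (starRingEnd ℂ) (mderiv (fun i => (α i : ℕ)) g y)‖
        ≤ S.card • (K * ((M * (r⁻¹ ^ m * C) ^ 2)
            * (volume (Metric.closedBall x r)).toReal)) :=
      Finset.sum_le_card_nsmul S _ _ h2
    rw [nsmul_eq_mul] at h3
    refine h3.trans_eq ?_
    rw [hKdef]; ring
  have hL2 : (∫ y in Ω, ‖g y‖ ^ 2)
      ≤ C ^ 2 * (volume (Metric.closedBall x r)).toReal := by
    have hmeas : AEStronglyMeasurable (fun y => (‖g y‖ ^ 2 : ℝ)) (volume.restrict Ω) :=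
      ((hg.continuous.norm).pow 2).aestronglyMeasurable
    have hae : ∀ᵐ y ∂(volume.restrict Ω), ‖(‖g y‖ ^ 2 : ℝ)‖
        ≤ C ^ 2 * (Metric.closedBall x r).indicator 1 y := by
      filter_upwards with y
      by_cases hmem : y ∈ Metric.closedBall x r
      · rw [Set.indicator_of_mem hmem, Pi.one_apply, mul_one, Real.norm_eq_abs,
          abs_of_nonneg (by positivity)]
        have := hCψ (r⁻¹ • (y - x))
        rw [hgdef]
        have h0 : (0:ℝ) ≤ ‖ψ (r⁻¹ • (y - x))‖ := norm_nonneg _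
        nlinarith
      · rw [Set.indicator_of_notMem hmem, mul_zero]
        have hz : g y = 0 := by
          by_contra h
          exact hmem (Metric.ball_subset_closedBall (hsupp (subset_tsupport g h)))
        rw [hz]
        simp
    have hkey := key_int hmeas measurableSet_closedBall measure_closedBall_lt_top.ne
      (by positivity : (0:ℝ) ≤ C ^ 2) hae
    exact (le_abs_self _).trans ((Real.norm_eq_abs _).symm ▸ hkey)
  have hcs2 : HasCompactSupport (fun y => (‖g y‖ ^ 2 : ℝ)) :=
    hcs.comp_left (g := fun z : ℂ => ‖z‖ ^ 2) (by simp)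
  have hint2 : IntegrableOn (fun y => (‖g y‖ ^ 2 : ℝ)) Ω :=
    (((hg.continuous.norm).pow 2).integrable_of_hasCompactSupport hcs2).integrableOn
  have hpos2 : 0 < ∫ y in Ω, ‖g y‖ ^ 2 := by
    rw [setIntegral_pos_iff_support_of_nonneg_ae
      (Filter.Eventually.of_forall (fun y => by positivity)) hint2]
    have hUopen : IsOpen (Function.support g ∩ Ω) :=
      (hg.continuous.isOpen_support).inter hΩo
    have hxU : x ∈ Function.support g ∩ Ω := by
      constructor
      · rw [Function.mem_support, hgx]; exact one_ne_zero
      · exact hx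
    have hsub : Function.support g ∩ Ω ⊆
        Function.support (fun y => (‖g y‖ ^ 2 : ℝ)) ∩ Ω := by
      intro y hy
      refine ⟨?_, hy.2⟩
      have := hy.1
      rw [Function.mem_support] at this ⊢
      simpa using this
    calc (0:ENNReal) < volume (Function.support g ∩ Ω) :=
          hUopen.measure_pos volume ⟨x, hxU⟩
      _ ≤ _ := measure_mono hsub
  have hvb : (volume (Metric.closedBall x r)).toReal = r ^ N * V := by
    rw [Measure.addHaar_closedBall volume x hr0.le, ENNReal.toReal_mul,
      ENNReal.toReal_ofReal (by positivity), hVdef]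
    congr 2
    simp [finrank_euclideanSpace_fin]
  have hub : t * (quadForm m Ω a g).re + (∫ y in Ω, ‖g y‖ ^ 2) ≤ D₀ * r ^ N := by
    have h1 : t * (quadForm m Ω a g).re ≤ K ^ 2 * M * C ^ 2 * V * r ^ N := by
      have h2 := mul_le_mul_of_nonneg_left hQ ht.le
      refine h2.trans_eq ?_
      rw [hvb, ← hrpow2m]
      have e : r ^ (2 * m) * (r⁻¹ ^ m) ^ 2 = 1 := by
        rw [← pow_mul, mul_comm m 2, ← mul_pow, mul_inv_cancel₀ hr0.ne', one_pow]
      linear_combination (K ^ 2 * M * C ^ 2 * V * r ^ N) * e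
    have h3 : (∫ y in Ω, ‖g y‖ ^ 2) ≤ C ^ 2 * V * r ^ N := by
      refine hL2.trans_eq ?_
      rw [hvb]; ring
    have h4 : D₀ * r ^ N = K ^ 2 * M * C ^ 2 * V * r ^ N + C ^ 2 * V * r ^ N := by
      rw [hD₀def]; ring
    linarith
  have hdenpos : 0 < t * (quadForm m Ω a g).re + (∫ y in Ω, ‖g y‖ ^ 2) :=
    add_pos_of_nonneg_of_pos (mul_nonneg ht.le (hQpos g htf)) hpos2
  refine ⟨g, htf, hgne, ?_⟩
  rw [hgx]
  have hnum : ‖(1:ℂ)‖ ^ 2 = 1 := by simp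
  rw [hnum]
  calc D₀⁻¹ * t ^ (-(N : ℝ) / (2 * m))
      = 1 / (D₀ * r ^ N) := by
        rw [neg_div, Real.rpow_neg ht.le, ← hrN, one_div, mul_inv]
    _ ≤ 1 / (t * (quadForm m Ω a g).re + (∫ y in Ω, ‖g y‖ ^ 2)) :=
        one_div_le_one_div_of_le hdenpos hub
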